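/- Let E be a weakly connected digraph on Fin N. Then the underlying ℝ-submodule of the Lie subalgebra of Matrix (Fin N) (Fin N) ℝ generated by {A i j | E i j} equals the ℝ-linear span of the matrices associated to the transitive closure of E: (LieSubalgebra.lieSpan ℝ (Matrix (Fin N) (Fin N) ℝ) {M | ∃ i j, E i j ∧ M = A i j}).toSubmodule = Submodule.span ℝ {M | ∃ i j, Relation.TransGen E i j ∧ M = A i j}. -/

import Mathlib

/-- The negative of the Laplacian of the single-edge digraph `i → j`. -/
def edgeMatrix {N : ℕ} (i j : Fin N) : Matrix (Fin N) (Fin N) ℝ :=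
  Matrix.single i j 1 - Matrix.single i i 1

attribute [local instance] LieRing.ofAssociativeRing

/-! If the span of a generating set is closed under brackets of generators, it is a Lie
subalgebra, hence the generated one. For a transitive relation, `⁅A i j, A j k⁆ = A i k - A i j`
gives this closure for its edge matrices; read backwards, the same identity produces `A i k` from
`A i j` and `A j k`, so the Lie algebra generated by the edges of `E` contains every edge of the
transitive closure of `E`. -/

namespace LieSubalgebra

variable {R L : Type*} [CommRing R] [LieRing L] [LieAlgebra R L]

theorem lie_mem_span_of_forall_lie_mem_span {s : Set L}
    (h : ∀ x ∈ s, ∀ y ∈ s, ⁅x, y⁆ ∈ Submodule.span R s) {x y : L}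
    (hx : x ∈ Submodule.span R s) (hy : y ∈ Submodule.span R s) :
    ⁅x, y⁆ ∈ Submodule.span R s := by
  induction hx, hy using Submodule.span_induction₂ with
  | mem_mem x y hx hy => exact h x hx y hy
  | zero_left y _ => simp
  | zero_right x _ => simp
  | add_left x y z _ _ _ hxz hyz => rw [add_lie]; exact add_mem hxz hyz
  | add_right x y z _ _ _ hxy hxz => rw [lie_add]; exact add_mem hxy hxz
  | smul_left c x y _ _ hxy => rw [smul_lie]; exact Submodule.smul_mem _ c hxy
  | smul_right c x y _ _ hxy => rw [lie_smul]; exact Submodule.smul_mem _ c hxy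

theorem toSubmodule_lieSpan_eq_span {s : Set L}
    (h : ∀ x ∈ s, ∀ y ∈ s, ⁅x, y⁆ ∈ Submodule.span R s) :
    (lieSpan R L s).toSubmodule = Submodule.span R s := by
  let K : LieSubalgebra R L :=
    { Submodule.span R s with lie_mem' := lie_mem_span_of_forall_lie_mem_span h }
  exact le_antisymm ((toSubmodule_le_toSubmodule _ K).2 (lieSpan_le.2 Submodule.subset_span))
    submodule_span_le_lieSpan

end LieSubalgebra

theorem Matrix.single_mul_single_eq_ite {l m n α : Type*} [Fintype m] [DecidableEq l]
    [DecidableEq m] [DecidableEq n] [NonUnitalNonAssocSemiring α] (i : l) (j k : m) (o : n)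
    (c d : α) :
    single i j c * single k o d = if j = k then single i o (c * d) else 0 := by
  split_ifs with h
  · subst h; simp
  · simp [h]

section EdgeMatrix

variable {N : ℕ}

def edgeMatrices (r : Fin N → Fin N → Prop) : Set (Matrix (Fin N) (Fin N) ℝ) :=
  {M | ∃ i j, r i j ∧ M = edgeMatrix i j}

theorem edgeMatrix_mem_edgeMatrices {r : Fin N → Fin N → Prop} {i j : Fin N} (h : r i j) :
    edgeMatrix i j ∈ edgeMatrices r :=
  ⟨i, j, h, rfl⟩

theorem edgeMatrices_mono {r s : Fin N → Fin N → Prop} (h : ∀ i j, r i j → s i j) :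
    edgeMatrices r ⊆ edgeMatrices s := by
  rintro _ ⟨i, j, hij, rfl⟩
  exact edgeMatrix_mem_edgeMatrices (h i j hij)

@[simp]
theorem edgeMatrix_self (i : Fin N) : edgeMatrix i i = 0 :=
  sub_self _

theorem lie_edgeMatrix (i j k l : Fin N) :
    ⁅edgeMatrix i j, edgeMatrix k l⁆ =
      (if j = k then edgeMatrix i l - edgeMatrix i j else 0)
      + (if l = i then edgeMatrix k i - edgeMatrix k j else 0)
      + (if i = k then edgeMatrix i j - edgeMatrix i l else 0) := by
  simp only [Ring.lie_def, edgeMatrix, sub_mul, mul_sub, Matrix.single_mul_single_eq_ite, mul_one]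
  split_ifs <;> subst_vars <;> first | exact absurd rfl (by assumption) | abel

theorem lie_edgeMatrix_edgeMatrix_of_ne {i j k : Fin N} (hij : i ≠ j) (hki : k ≠ i) :
    ⁅edgeMatrix i j, edgeMatrix j k⁆ = edgeMatrix i k - edgeMatrix i j := by
  simp [lie_edgeMatrix, hij, hki]

theorem lie_mem_span_edgeMatrices {r : Fin N → Fin N → Prop} [IsTrans (Fin N) r]
    {x y : Matrix (Fin N) (Fin N) ℝ} (hx : x ∈ edgeMatrices r) (hy : y ∈ edgeMatrices r) :
    ⁅x, y⁆ ∈ Submodule.span ℝ (edgeMatrices r) := by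
  obtain ⟨i, j, hij, rfl⟩ := hx
  obtain ⟨k, l, hkl, rfl⟩ := hy
  have mem {a b : Fin N} (h : r a b) : edgeMatrix a b ∈ Submodule.span ℝ (edgeMatrices r) :=
    Submodule.subset_span (edgeMatrix_mem_edgeMatrices h)
  rw [lie_edgeMatrix]
  refine add_mem (add_mem ?_ ?_) ?_ <;> split_ifs with h <;>
    first | exact zero_mem _ | subst h
  · exact sub_mem (mem (_root_.trans hij hkl)) (mem hij)
  · exact sub_mem (mem hkl) (mem (_root_.trans hkl hij))
  · exact sub_mem (mem hij) (mem hkl)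

theorem toSubmodule_lieSpan_edgeMatrices {r : Fin N → Fin N → Prop} [IsTrans (Fin N) r] :
    (LieSubalgebra.lieSpan ℝ _ (edgeMatrices r)).toSubmodule =
      Submodule.span ℝ (edgeMatrices r) :=
  LieSubalgebra.toSubmodule_lieSpan_eq_span fun _ hx _ hy => lie_mem_span_edgeMatrices hx hy

theorem edgeMatrices_transGen_subset_lieSpan (r : Fin N → Fin N → Prop) :
    edgeMatrices (Relation.TransGen r) ⊆ LieSubalgebra.lieSpan ℝ _ (edgeMatrices r) := by
  rintro _ ⟨i, k, hik, rfl⟩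
  induction hik with
  | single h => exact LieSubalgebra.subset_lieSpan (edgeMatrix_mem_edgeMatrices h)
  | @tail j k _ hjk ih =>
    have hjk' := LieSubalgebra.subset_lieSpan (R := ℝ) (edgeMatrix_mem_edgeMatrices hjk)
    by_cases hij : i = j
    · subst hij; exact hjk'
    by_cases hki : k = i
    · subst hki; simp
    rw [← sub_add_cancel (edgeMatrix i k) (edgeMatrix i j),
      ← lie_edgeMatrix_edgeMatrix_of_ne hij hki]
    exact add_mem (LieSubalgebra.lie_mem _ ih hjk') ih

end EdgeMatrix

theorem lieSpan_eq_span_transClosure_general {N : ℕ} (E : Fin N → Fin N → Prop) :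
    (LieSubalgebra.lieSpan ℝ (Matrix (Fin N) (Fin N) ℝ)
        {M | ∃ i j, E i j ∧ M = edgeMatrix i j}).toSubmodule =
      Submodule.span ℝ {M | ∃ i j, Relation.TransGen E i j ∧ M = edgeMatrix i j} := by
  change (LieSubalgebra.lieSpan ℝ _ (edgeMatrices E)).toSubmodule =
    Submodule.span ℝ (edgeMatrices (Relation.TransGen E))
  refine le_antisymm ?_ (Submodule.span_le.2 (edgeMatrices_transGen_subset_lieSpan E))
  calc (LieSubalgebra.lieSpan ℝ _ (edgeMatrices E)).toSubmodule
      ≤ (LieSubalgebra.lieSpan ℝ _ (edgeMatrices (Relation.TransGen E))).toSubmodule :=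
        LieSubalgebra.lieSpan_mono (edgeMatrices_mono fun _ _ => Relation.TransGen.single)
    _ = Submodule.span ℝ (edgeMatrices (Relation.TransGen E)) :=
        toSubmodule_lieSpan_edgeMatrices

theorem lieSpan_eq_span_transClosure {N : ℕ} (E : Fin N → Fin N → Prop)
    (hwc : ∀ i j : Fin N, Relation.ReflTransGen (fun a b => E a b ∨ E b a) i j) :
    (LieSubalgebra.lieSpan ℝ (Matrix (Fin N) (Fin N) ℝ)
        {M | ∃ i j, E i j ∧ M = edgeMatrix i j}).toSubmodule =
      Submodule.span ℝ {M | ∃ i j, Relation.TransGen E i j ∧ M = edgeMatrix i j} :=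
  lieSpan_eq_span_transClosure_general E
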